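/- arXiv:2601.21705 — 5 statements merged into one kernel-verified Lean document; each statement's English description precedes it below -/
import Mathlib

section
/- For every ρ > 0, V_ρ(b*_ρ) = μ/ρ; equivalently, (e^{γ₁(ρ)b*_ρ} − e^{γ₂(ρ)b*_ρ})/(γ₁(ρ)e^{γ₁(ρ)b*_ρ} − γ₂(ρ)e^{γ₂(ρ)b*_ρ}) = μ/ρ = (γ₁(ρ) + γ₂(ρ))/(γ₁(ρ)·γ₂(ρ)). -/
open Real Set Filter

noncomputable def gam1 (μ σ ρ : ℝ) : ℝ := Real.sqrt (μ^2/σ^4 + 2*ρ/σ^2) - μ/σ^2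

noncomputable def gam2 (μ σ ρ : ℝ) : ℝ := -Real.sqrt (μ^2/σ^4 + 2*ρ/σ^2) - μ/σ^2

/-- The classical optimal dividend boundary `b*_ρ`. -/
noncomputable def bstar (μ σ ρ : ℝ) : ℝ :=
  Real.log ((gam2 μ σ ρ)^2 / (gam1 μ σ ρ)^2) / (gam1 μ σ ρ - gam2 μ σ ρ)

/-- The classical value function `V_ρ`. -/
noncomputable def Vfun (μ σ ρ x : ℝ) : ℝ :=
  if x < bstar μ σ ρ then
    (Real.exp (gam1 μ σ ρ * x) - Real.exp (gam2 μ σ ρ * x)) /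
      (gam1 μ σ ρ * Real.exp (gam1 μ σ ρ * bstar μ σ ρ) -
        gam2 μ σ ρ * Real.exp (gam2 μ σ ρ * bstar μ σ ρ))
  else
    (Real.exp (gam1 μ σ ρ * bstar μ σ ρ) - Real.exp (gam2 μ σ ρ * bstar μ σ ρ)) /
      (gam1 μ σ ρ * Real.exp (gam1 μ σ ρ * bstar μ σ ρ) -
        gam2 μ σ ρ * Real.exp (gam2 μ σ ρ * bstar μ σ ρ)) + x - bstar μ σ ρ

/-- `δ(y) = e^{γ₁(r+q)y} − e^{γ₂(r+q)y}`. -/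
noncomputable def del (μ σ r q y : ℝ) : ℝ :=
  Real.exp (gam1 μ σ (r+q) * y) - Real.exp (gam2 μ σ (r+q) * y)

/-- `δ'(y)`. -/
noncomputable def delP (μ σ r q y : ℝ) : ℝ :=
  gam1 μ σ (r+q) * Real.exp (gam1 μ σ (r+q) * y) -
    gam2 μ σ (r+q) * Real.exp (gam2 μ σ (r+q) * y)

/-- `δ''(y)`. -/
noncomputable def delPP (μ σ r q y : ℝ) : ℝ :=
  (gam1 μ σ (r+q))^2 * Real.exp (gam1 μ σ (r+q) * y) -
    (gam2 μ σ (r+q))^2 * Real.exp (gam2 μ σ (r+q) * y)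

/-- `y_u := b*_{r+q} + μ/r − μ/(r+q)`. -/
noncomputable def yUpper (μ σ r q : ℝ) : ℝ := bstar μ σ (r+q) + μ/r - μ/(r+q)

/-- `Δ(y)`. -/
noncomputable def DeltaF (μ σ r q y : ℝ) : ℝ :=
  (1/(gam1 μ σ r - gam2 μ σ r)) *
    Real.log ((gam2 μ σ r)^2 * (delP μ σ r q y - gam1 μ σ r * del μ σ r q y) /
      ((gam1 μ σ r)^2 * (delP μ σ r q y - gam2 μ σ r * del μ σ r q y)))

/-- `b*(y) = y + Δ(y)`. -/
noncomputable def bstarY (μ σ r q y : ℝ) : ℝ := y + DeltaF μ σ r q y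

noncomputable def psiF (μ σ ρ x : ℝ) : ℝ := Real.exp (gam1 μ σ ρ * x)
noncomputable def phiF (μ σ ρ x : ℝ) : ℝ := Real.exp (gam2 μ σ ρ * x)
noncomputable def psiP (μ σ ρ x : ℝ) : ℝ := gam1 μ σ ρ * Real.exp (gam1 μ σ ρ * x)
noncomputable def phiP (μ σ ρ x : ℝ) : ℝ := gam2 μ σ ρ * Real.exp (gam2 μ σ ρ * x)

/-- `η(y;b) = ψ'_r(b)φ_r(y) − φ'_r(b)ψ_r(y)`. -/
noncomputable def etaF (μ σ r y b : ℝ) : ℝ :=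
  psiP μ σ r b * phiF μ σ r y - phiP μ σ r b * psiF μ σ r y

/-- `η'(y;b)` (derivative in `y`). -/
noncomputable def etaP (μ σ r y b : ℝ) : ℝ :=
  psiP μ σ r b * phiP μ σ r y - phiP μ σ r b * psiP μ σ r y

/-- `K₁(y)`. -/
noncomputable def K1 (μ σ r q y : ℝ) : ℝ :=
  (psiF μ σ r y * etaP μ σ r y (bstarY μ σ r q y) -
    psiP μ σ r y * etaF μ σ r y (bstarY μ σ r q y)) /
  (psiP μ σ r (bstarY μ σ r q y) *
    (del μ σ r q y * etaP μ σ r y (bstarY μ σ r q y) -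
      delP μ σ r q y * etaF μ σ r y (bstarY μ σ r q y)))

/-- `K₂(y) = −K₁(y)`. -/
noncomputable def K2 (μ σ r q y : ℝ) : ℝ := -K1 μ σ r q y

/-- `K₃(y)`. -/
noncomputable def K3 (μ σ r q y : ℝ) : ℝ :=
  (phiP μ σ r (bstarY μ σ r q y) *
      (del μ σ r q y * psiP μ σ r y - delP μ σ r q y * psiF μ σ r y) +
    del μ σ r q y * etaP μ σ r y (bstarY μ σ r q y) -
      delP μ σ r q y * etaF μ σ r y (bstarY μ σ r q y)) /
  (psiP μ σ r (bstarY μ σ r q y) *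
    (del μ σ r q y * etaP μ σ r y (bstarY μ σ r q y) -
      delP μ σ r q y * etaF μ σ r y (bstarY μ σ r q y)))

/-- `K₄(y)`. -/
noncomputable def K4 (μ σ r q y : ℝ) : ℝ :=
  (psiF μ σ r y * delP μ σ r q y - psiP μ σ r y * del μ σ r q y) /
  (del μ σ r q y * etaP μ σ r y (bstarY μ σ r q y) -
    delP μ σ r q y * etaF μ σ r y (bstarY μ σ r q y))

/-- The candidate value function `w(·;y)` in the subcritical regime. -/
noncomputable def wfun (μ σ r q y x : ℝ) : ℝ :=
  if x < y then
    K1 μ σ r q y * Real.exp (gam1 μ σ (r+q) * x) + K2 μ σ r q y * Real.exp (gam2 μ σ (r+q) * x)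
  else if x < bstarY μ σ r q y then
    K3 μ σ r q y * Real.exp (gam1 μ σ r * x) + K4 μ σ r q y * Real.exp (gam2 μ σ r * x)
  else
    K3 μ σ r q y * Real.exp (gam1 μ σ r * bstarY μ σ r q y) +
      K4 μ σ r q y * Real.exp (gam2 μ σ r * bstarY μ σ r q y) + x - bstarY μ σ r q y

/-- The function `f` characterising the critical level `y_l`. -/
noncomputable def fF (μ σ r q y : ℝ) : ℝ :=
  (-(gam1 μ σ r / gam2 μ σ r) * delP μ σ r q y + gam1 μ σ r * del μ σ r q y) *
    ((gam2 μ σ r)^2/(gam1 μ σ r)^2 *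
      ((delP μ σ r q y - gam1 μ σ r * del μ σ r q y) /
        (delP μ σ r q y - gam2 μ σ r * del μ σ r q y)))
      ^ (gam1 μ σ r / (gam1 μ σ r - gam2 μ σ r))
  - delP μ σ r q (bstar μ σ (r+q))

noncomputable def e1F (μ σ r q b : ℝ) : ℝ :=
  (phiF μ σ (r+q) b - phiP μ σ (r+q) b * Vfun μ σ (r+q) b) /
  (psiP μ σ (r+q) b * phiF μ σ (r+q) b - psiF μ σ (r+q) b * phiP μ σ (r+q) b)

noncomputable def e2F (μ σ r q b : ℝ) : ℝ :=
  (psiP μ σ (r+q) b * Vfun μ σ (r+q) b - psiF μ σ (r+q) b) /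
  (psiP μ σ (r+q) b * phiF μ σ (r+q) b - psiF μ σ (r+q) b * phiP μ σ (r+q) b)

noncomputable def e3F (μ σ r q b y : ℝ) : ℝ :=
  (e1F μ σ r q b * (phiF μ σ r y * psiP μ σ (r+q) y - phiP μ σ r y * psiF μ σ (r+q) y) +
    e2F μ σ r q b * (phiF μ σ r y * phiP μ σ (r+q) y - phiP μ σ r y * phiF μ σ (r+q) y)) /
  (psiP μ σ r y * phiF μ σ r y - psiF μ σ r y * phiP μ σ r y)

noncomputable def e4F (μ σ r q b y : ℝ) : ℝ :=
  (e1F μ σ r q b * (psiP μ σ r y * psiF μ σ (r+q) y - psiF μ σ r y * psiP μ σ (r+q) y) +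
    e2F μ σ r q b * (psiP μ σ r y * phiF μ σ (r+q) y - psiF μ σ r y * phiP μ σ (r+q) y)) /
  (psiP μ σ r y * phiF μ σ r y - psiF μ σ r y * phiP μ σ r y)

/-- The function `H(b,y)` from the critical regime. -/
noncomputable def Hfun (μ σ r q b y : ℝ) : ℝ :=
  (gam1 μ σ r - gam2 μ σ r) *
    (-gam2 μ σ r / gam1 μ σ r) ^ ((gam1 μ σ r + gam2 μ σ r)/(gam1 μ σ r - gam2 μ σ r)) *
    (e3F μ σ r q b y) ^ (-gam2 μ σ r/(gam1 μ σ r - gam2 μ σ r)) *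
    (-e4F μ σ r q b y) ^ (gam1 μ σ r/(gam1 μ σ r - gam2 μ σ r))

/-- `Λ(b,y) = −e₄(b,y)/e₃(b,y)`. -/
noncomputable def Lamfun (μ σ r q b y : ℝ) : ℝ := -e4F μ σ r q b y / e3F μ σ r q b y

/-- `L(y)`. -/
noncomputable def Lfun (μ σ r q y : ℝ) : ℝ :=
  (1/(gam1 μ σ r - gam2 μ σ r)) *
    Real.log ((gam2 μ σ r)^2/(gam1 μ σ r)^2 * Lamfun μ σ r q y y) - y

/-!
The boundary `b*_ρ` is chosen exactly so that `γ₁² e^{γ₁ b*} = γ₂² e^{γ₂ b*}`, i.e. `V_ρ'' (b*_ρ) = 0`.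
Cross-multiplying, this identity turns the ratio defining `V_ρ(b*_ρ)` into `(γ₁ + γ₂)/(γ₁ γ₂)`,
and Vieta's formulas for the roots `γ₁, γ₂` of `σ²γ²/2 + μγ − ρ` give `γ₁ + γ₂ = −2μ/σ²` and
`γ₁ γ₂ = −2ρ/σ²`, whose quotient is `μ/ρ`.
-/

theorem sq_mul_exp_eq_of_log_div_sub {a b : ℝ} (ha : a ≠ 0) (hb : b ≠ 0) (hab : a ≠ b) :
    a ^ 2 * Real.exp (a * (Real.log (b ^ 2 / a ^ 2) / (a - b))) =
      b ^ 2 * Real.exp (b * (Real.log (b ^ 2 / a ^ 2) / (a - b))) := by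
  set t := Real.log (b ^ 2 / a ^ 2) / (a - b)
  have hgap : Real.exp ((a - b) * t) = b ^ 2 / a ^ 2 := by
    rw [mul_div_cancel₀ _ (sub_ne_zero.mpr hab), Real.exp_log (by positivity)]
  have hsplit : Real.exp (a * t) = Real.exp (b * t) * Real.exp ((a - b) * t) := by
    rw [← Real.exp_add]; ring_nf
  rw [hsplit, hgap]
  field_simp

theorem sub_div_sub_eq_add_div_mul_of_sq_mul_eq {a b x y : ℝ} (ha : a ≠ 0) (hb : b ≠ 0)
    (hden : a * x - b * y ≠ 0) (h : a ^ 2 * x = b ^ 2 * y) :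
    (x - y) / (a * x - b * y) = (a + b) / (a * b) := by
  rw [div_eq_div_iff hden (mul_ne_zero ha hb)]
  linear_combination -h

theorem gam1_add_gam2 (μ σ ρ : ℝ) : gam1 μ σ ρ + gam2 μ σ ρ = -(2 * μ / σ ^ 2) := by
  unfold gam1 gam2; ring

theorem gam1_mul_gam2 (μ σ : ℝ) {ρ : ℝ} (hρ : 0 ≤ ρ) :
    gam1 μ σ ρ * gam2 μ σ ρ = -(2 * ρ / σ ^ 2) := by
  have hsq := Real.sq_sqrt (show 0 ≤ μ ^ 2 / σ ^ 4 + 2 * ρ / σ ^ 2 by positivity)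
  unfold gam1 gam2
  linear_combination -hsq + (by ring : (μ / σ ^ 2) ^ 2 = μ ^ 2 / σ ^ 4)

theorem gam2_neg_and_gam1_pos (μ : ℝ) {σ ρ : ℝ} (hσ : σ ≠ 0) (hρ : 0 < ρ) :
    gam2 μ σ ρ < 0 ∧ 0 < gam1 μ σ ρ := by
  have hlt : |μ / σ ^ 2| < Real.sqrt (μ ^ 2 / σ ^ 4 + 2 * ρ / σ ^ 2) := by
    rw [Real.lt_sqrt (abs_nonneg _), sq_abs, div_pow, ← pow_mul]
    have : 0 < 2 * ρ / σ ^ 2 := by positivity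
    linarith
  unfold gam1 gam2
  constructor <;> linarith [le_abs_self (μ / σ ^ 2), neg_abs_le (μ / σ ^ 2)]

theorem div_eq_gam1_add_gam2_div_mul (μ : ℝ) {σ ρ : ℝ} (hσ : σ ≠ 0) (hρ : 0 ≤ ρ) :
    μ / ρ = (gam1 μ σ ρ + gam2 μ σ ρ) / (gam1 μ σ ρ * gam2 μ σ ρ) := by
  rw [gam1_add_gam2, gam1_mul_gam2 μ σ hρ, neg_div_neg_eq]
  field_simp

theorem stmt1_general (μ σ : ℝ) (hσ : 0 < σ)
    (ρ : ℝ) (hρ : 0 < ρ) :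
    Vfun μ σ ρ (bstar μ σ ρ) = μ/ρ ∧
    (Real.exp (gam1 μ σ ρ * bstar μ σ ρ) - Real.exp (gam2 μ σ ρ * bstar μ σ ρ)) /
      (gam1 μ σ ρ * Real.exp (gam1 μ σ ρ * bstar μ σ ρ) -
        gam2 μ σ ρ * Real.exp (gam2 μ σ ρ * bstar μ σ ρ)) = μ/ρ ∧
    μ/ρ = (gam1 μ σ ρ + gam2 μ σ ρ) / (gam1 μ σ ρ * gam2 μ σ ρ) := by
  obtain ⟨hg2, hg1⟩ := gam2_neg_and_gam1_pos μ hσ.ne' hρ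
  have hden : gam1 μ σ ρ * Real.exp (gam1 μ σ ρ * bstar μ σ ρ) -
      gam2 μ σ ρ * Real.exp (gam2 μ σ ρ * bstar μ σ ρ) ≠ 0 := by
    have := mul_pos hg1 (Real.exp_pos (gam1 μ σ ρ * bstar μ σ ρ))
    have := mul_neg_of_neg_of_pos hg2 (Real.exp_pos (gam2 μ σ ρ * bstar μ σ ρ))
    linarith
  have hμρ := div_eq_gam1_add_gam2_div_mul μ hσ.ne' hρ.le
  have hratio := (sub_div_sub_eq_add_div_mul_of_sq_mul_eq hg1.ne' hg2.ne hden
    (sq_mul_exp_eq_of_log_div_sub hg1.ne' hg2.ne (hg2.trans hg1).ne')).trans hμρ.symm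
  refine ⟨?_, hratio, hμρ⟩
  rw [Vfun, if_neg (lt_irrefl _), hratio]
  ring

/-- `V_ρ(b*_ρ) = μ/ρ`, with the explicit expression, and
`μ/ρ = (γ₁(ρ)+γ₂(ρ))/(γ₁(ρ)·γ₂(ρ))`. -/
theorem stmt1 (μ σ r q : ℝ) (hμ : 0 < μ) (hσ : 0 < σ) (hr : 0 < r) (hq : 0 < q)
    (ρ : ℝ) (hρ : 0 < ρ) :
    Vfun μ σ ρ (bstar μ σ ρ) = μ/ρ ∧
    (Real.exp (gam1 μ σ ρ * bstar μ σ ρ) - Real.exp (gam2 μ σ ρ * bstar μ σ ρ)) /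
      (gam1 μ σ ρ * Real.exp (gam1 μ σ ρ * bstar μ σ ρ) -
        gam2 μ σ ρ * Real.exp (gam2 μ σ ρ * bstar μ σ ρ)) = μ/ρ ∧
    μ/ρ = (gam1 μ σ ρ + gam2 μ σ ρ) / (gam1 μ σ ρ * gam2 μ σ ρ) :=
  stmt1_general μ σ hσ ρ hρ
end

section
/- The mapping ρ ↦ b*_ρ is strictly decreasing on (0,∞); that is, for all 0 < ρ₁ < ρ₂ one has b*_{ρ₂} < b*_{ρ₁}. -/
open Real Set Filter

/-! Writing `s = √(μ²/σ⁴ + 2ρ/σ²)` and `m = μ/σ²`, we have `γ₁ = s - m` and `γ₂ = -s - m`, so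
`b*_ρ = log ((s + m) / (s - m)) / s`. This is strictly decreasing in `s > m` when `m > 0`, and `s`
increases strictly with `ρ`. -/

/-- Both factors `log ((s + m) / (s - m))` and `1 / s` are positive and strictly decreasing. -/
lemma strictAntiOn_log_div_div {m : ℝ} (hm : 0 < m) :
    StrictAntiOn (fun s => log ((s + m) / (s - m)) / s) (Ioi m) := by
  intro s (hs : m < s) t (ht : m < t) hst
  have hs0 : 0 < s - m := sub_pos.mpr hs
  have ht0 : 0 < t - m := sub_pos.mpr ht
  have hratio : (t + m) / (t - m) < (s + m) / (s - m) := by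
    rw [div_lt_div_iff₀ ht0 hs0]
    nlinarith
  have hlog_pos : 0 < log ((t + m) / (t - m)) :=
    log_pos ((one_lt_div ht0).mpr (by linarith))
  have hlog_lt : log ((t + m) / (t - m)) < log ((s + m) / (s - m)) :=
    log_lt_log (div_pos (by linarith) ht0) hratio
  calc log ((t + m) / (t - m)) / t
      < log ((s + m) / (s - m)) / t := div_lt_div_of_pos_right hlog_lt (by linarith)
    _ < log ((s + m) / (s - m)) / s := div_lt_div_of_pos_left (by linarith) (by linarith) hst

lemma bstar_eq_log_div_div (μ σ ρ : ℝ) :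
    bstar μ σ ρ = log ((sqrt (μ^2/σ^4 + 2*ρ/σ^2) + μ/σ^2) / (sqrt (μ^2/σ^4 + 2*ρ/σ^2) - μ/σ^2)) /
      sqrt (μ^2/σ^4 + 2*ρ/σ^2) := by
  set s := sqrt (μ^2/σ^4 + 2*ρ/σ^2)
  set m := μ/σ^2
  have hsq : (-s - m)^2 / (s - m)^2 = ((s + m) / (s - m))^2 := by rw [div_pow]; ring
  rw [bstar, gam1, gam2, hsq, log_pow, show s - m - (-s - m) = 2 * s by ring]
  push_cast
  rw [mul_div_mul_left _ _ two_ne_zero]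

theorem stmt2_general (μ σ : ℝ) (hμ : 0 < μ) (hσ : 0 < σ)
    (ρ₁ ρ₂ : ℝ) (hρ₁ : 0 < ρ₁) (h12 : ρ₁ < ρ₂) :
    bstar μ σ ρ₂ < bstar μ σ ρ₁ := by
  rw [bstar_eq_log_div_div, bstar_eq_log_div_div]
  have hm : 0 < μ/σ^2 := by positivity
  have hs₁ : μ/σ^2 < sqrt (μ^2/σ^4 + 2*ρ₁/σ^2) := by
    rw [lt_sqrt hm.le, show (μ/σ^2)^2 = μ^2/σ^4 by ring]
    have : 0 < 2*ρ₁/σ^2 := by positivity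
    linarith
  have hs₁₂ : sqrt (μ^2/σ^4 + 2*ρ₁/σ^2) < sqrt (μ^2/σ^4 + 2*ρ₂/σ^2) := by
    have : 2*ρ₁/σ^2 < 2*ρ₂/σ^2 := by gcongr
    exact sqrt_lt_sqrt (by positivity) (by linarith)
  exact strictAntiOn_log_div_div hm hs₁ (hs₁.trans hs₁₂) hs₁₂

/-- `ρ ↦ b*_ρ` is strictly decreasing on `(0,∞)`. -/
theorem stmt2 (μ σ r q : ℝ) (hμ : 0 < μ) (hσ : 0 < σ) (hr : 0 < r) (hq : 0 < q)
    (ρ₁ ρ₂ : ℝ) (hρ₁ : 0 < ρ₁) (h12 : ρ₁ < ρ₂) :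
    bstar μ σ ρ₂ < bstar μ σ ρ₁ :=
  stmt2_general μ σ hμ hσ ρ₁ ρ₂ hρ₁ h12
end

section
/- For every ρ > 0: (a) (σ²/2)V_ρ''(x) + μ·V_ρ'(x) − ρ·V_ρ(x) = 0 for all x ∈ (0, b*_ρ); (b) V_ρ(0) = 0; (c) V_ρ is twice continuously differentiable on (0,∞); in particular the one-sided limits at b*_ρ satisfy V_ρ'(b*_ρ−) = 1 and V_ρ''(b*_ρ−) = 0, matching the right-hand values V_ρ' ≡ 1 and V_ρ'' ≡ 0 on (b*_ρ,∞). -/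
open Real Set Filter

/-
On `[0, b*]`, `V = (e^{γ₁x} − e^{γ₂x}) / D` with `γ₁, γ₂` the roots of the characteristic
polynomial `σ²/2 γ² + μγ − ρ`, so `V` solves the ODE there; beyond `b*` it is extended by its
tangent line. Extending a differentiable `f` by its tangent line at `b` always gives a
differentiable function with derivative `f' (min x b)`. Since `b*` is the inflection point of
`e^{γ₁x} − e^{γ₂x}`, this derivative is itself a tangent extension (of slope zero), so it is
differentiable again with continuous derivative `f'' (min x b)`, and `V` is `C²`.
-/

noncomputable def tangentExtension (f : ℝ → ℝ) (c b x : ℝ) : ℝ := f (min x b) + c * (x - min x b)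

theorem hasDerivAt_tangentExtension {f f' : ℝ → ℝ} {b : ℝ} (hf : ∀ y, HasDerivAt f (f' y) y)
    (x : ℝ) : HasDerivAt (tangentExtension f (f' b) b) (f' (min x b)) x := by
  have hline : ∀ y, HasDerivAt (fun x => f b + f' b * (x - b)) (f' b) y := fun y => by
    simpa using ((hasDerivAt_id y).sub_const b).const_mul (f' b) |>.const_add (f b)
  have hleft : EqOn (tangentExtension f (f' b) b) f (Iic b) := fun y hy => by
    simp [tangentExtension, min_eq_left (mem_Iic.mp hy)]
  have hright : EqOn (tangentExtension f (f' b) b) (fun x => f b + f' b * (x - b)) (Ici b) :=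
    fun y hy => by simp [tangentExtension, min_eq_right (mem_Ici.mp hy)]
  rcases lt_trichotomy x b with h | rfl | h
  · rw [min_eq_left h.le]
    exact (hf x).congr_of_eventuallyEq (eventuallyEq_of_mem (Iic_mem_nhds h) hleft)
  · rw [min_self, ← hasDerivWithinAt_univ, ← Iic_union_Ici (a := x)]
    exact ((hf x).hasDerivWithinAt.congr hleft (hleft self_mem_Iic)).union
      ((hline x).hasDerivWithinAt.congr hright (hright self_mem_Ici))
  · rw [min_eq_right h.le]
    exact (hline x).congr_of_eventuallyEq (eventuallyEq_of_mem (Ici_mem_nhds h) hright)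

theorem hasDerivAt_comp_min_of_deriv_eq_zero {f f' : ℝ → ℝ} {b : ℝ}
    (hf : ∀ y, HasDerivAt f (f' y) y) (hb : f' b = 0) (x : ℝ) :
    HasDerivAt (fun x => f (min x b)) (f' (min x b)) x := by
  have h := hasDerivAt_tangentExtension (b := b) hf x
  rw [hb] at h
  exact h.congr_of_eventuallyEq (.of_forall fun y => by simp [tangentExtension])

theorem contDiff_two_of_hasDerivAt {g g₁ g₂ : ℝ → ℝ} (h₁ : ∀ x, HasDerivAt g (g₁ x) x)
    (h₂ : ∀ x, HasDerivAt g₁ (g₂ x) x) (hc : Continuous g₂) : ContDiff ℝ 2 g := by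
  have hg : deriv g = g₁ := funext fun x => (h₁ x).deriv
  have hg₁ : deriv g₁ = g₂ := funext fun x => (h₂ x).deriv
  rw [show (2 : WithTop ℕ∞) = 0 + 1 + 1 from rfl, contDiff_succ_iff_deriv]
  refine ⟨fun x => (h₁ x).differentiableAt, by simp, ?_⟩
  rw [hg, contDiff_succ_iff_deriv, hg₁, contDiff_zero]
  exact ⟨fun x => (h₂ x).differentiableAt, by simp, hc⟩

noncomputable def expSubDeriv (g₁ g₂ : ℝ) (k : ℕ) (x : ℝ) : ℝ :=
  g₁ ^ k * exp (g₁ * x) - g₂ ^ k * exp (g₂ * x)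

theorem hasDerivAt_expSubDeriv (g₁ g₂ : ℝ) (k : ℕ) (x : ℝ) :
    HasDerivAt (expSubDeriv g₁ g₂ k) (expSubDeriv g₁ g₂ (k + 1) x) x := by
  have hexp (g : ℝ) :
      HasDerivAt (fun x => g ^ k * exp (g * x)) (g ^ (k + 1) * exp (g * x)) x :=
    (((hasDerivAt_id' x).const_mul g).exp.const_mul (g ^ k)).congr_deriv (by ring)
  exact (hexp g₁).sub (hexp g₂)

theorem continuous_expSubDeriv (g₁ g₂ : ℝ) (k : ℕ) : Continuous (expSubDeriv g₁ g₂ k) := by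
  unfold expSubDeriv
  fun_prop

theorem expSubDeriv_two_log_div_eq_zero {g₁ g₂ : ℝ} (h₁ : g₁ ≠ 0) (h₂ : g₂ ≠ 0) (h : g₁ ≠ g₂) :
    expSubDeriv g₁ g₂ 2 (log (g₂ ^ 2 / g₁ ^ 2) / (g₁ - g₂)) = 0 := by
  set t := log (g₂ ^ 2 / g₁ ^ 2) / (g₁ - g₂)
  have hexp : exp (g₁ * t - g₂ * t) = g₂ ^ 2 / g₁ ^ 2 := by
    rw [← sub_mul, mul_div_cancel₀ _ (sub_ne_zero.mpr h), exp_log (by positivity)]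
  rw [exp_sub, div_eq_div_iff (exp_pos _).ne' (by positivity)] at hexp
  unfold expSubDeriv
  linear_combination hexp

theorem expSubDeriv_one_pos {g₁ g₂ : ℝ} (h₁ : 0 < g₁) (h₂ : g₂ < 0) (x : ℝ) :
    0 < expSubDeriv g₁ g₂ 1 x := by
  unfold expSubDeriv
  nlinarith [exp_pos (g₁ * x), exp_pos (g₂ * x)]

theorem expSubDeriv_ode {μ σ ρ g₁ g₂ : ℝ} (h₁ : σ ^ 2 / 2 * g₁ ^ 2 + μ * g₁ - ρ = 0)
    (h₂ : σ ^ 2 / 2 * g₂ ^ 2 + μ * g₂ - ρ = 0) (x : ℝ) :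
    σ ^ 2 / 2 * expSubDeriv g₁ g₂ 2 x + μ * expSubDeriv g₁ g₂ 1 x - ρ * expSubDeriv g₁ g₂ 0 x
      = 0 := by
  unfold expSubDeriv
  linear_combination exp (g₁ * x) * h₁ - exp (g₂ * x) * h₂

section Roots

variable {μ σ ρ : ℝ}

theorem charPoly_eq_zero_of_sq_eq (hσ : σ ≠ 0) {s : ℝ}
    (hs : s ^ 2 = μ ^ 2 / σ ^ 4 + 2 * ρ / σ ^ 2) :
    σ ^ 2 / 2 * (s - μ / σ ^ 2) ^ 2 + μ * (s - μ / σ ^ 2) - ρ = 0 := by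
  have key : σ ^ 2 / 2 * (s - μ / σ ^ 2) ^ 2 + μ * (s - μ / σ ^ 2) - ρ
      = σ ^ 2 / 2 * (s ^ 2 - (μ ^ 2 / σ ^ 4 + 2 * ρ / σ ^ 2)) := by
    field_simp
    ring
  rw [key, hs, sub_self, mul_zero]

theorem sq_sqrt_discriminant (hρ : 0 ≤ ρ) :
    √(μ ^ 2 / σ ^ 4 + 2 * ρ / σ ^ 2) ^ 2 = μ ^ 2 / σ ^ 4 + 2 * ρ / σ ^ 2 :=
  sq_sqrt (by positivity)

theorem charPoly_gam1 (hσ : σ ≠ 0) (hρ : 0 ≤ ρ) :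
    σ ^ 2 / 2 * gam1 μ σ ρ ^ 2 + μ * gam1 μ σ ρ - ρ = 0 :=
  charPoly_eq_zero_of_sq_eq hσ (sq_sqrt_discriminant hρ)

theorem charPoly_gam2 (hσ : σ ≠ 0) (hρ : 0 ≤ ρ) :
    σ ^ 2 / 2 * gam2 μ σ ρ ^ 2 + μ * gam2 μ σ ρ - ρ = 0 :=
  charPoly_eq_zero_of_sq_eq hσ (by rw [neg_sq]; exact sq_sqrt_discriminant hρ)

theorem abs_div_lt_sqrt_discriminant (hσ : σ ≠ 0) (hρ : 0 < ρ) :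
    |μ / σ ^ 2| < √(μ ^ 2 / σ ^ 4 + 2 * ρ / σ ^ 2) := by
  refine abs_lt_of_sq_lt_sq ?_ (sqrt_nonneg _)
  rw [sq_sqrt_discriminant hρ.le, div_pow, ← pow_mul]
  have : 0 < 2 * ρ / σ ^ 2 := by positivity
  linarith

theorem gam1_pos (hσ : σ ≠ 0) (hρ : 0 < ρ) : 0 < gam1 μ σ ρ := by
  have := abs_div_lt_sqrt_discriminant (μ := μ) hσ hρ
  unfold gam1
  linarith [le_abs_self (μ / σ ^ 2)]

theorem gam2_neg (hσ : σ ≠ 0) (hρ : 0 < ρ) : gam2 μ σ ρ < 0 := by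
  have := abs_div_lt_sqrt_discriminant (μ := μ) hσ hρ
  unfold gam2
  linarith [neg_abs_le (μ / σ ^ 2)]

theorem gam1_sq_lt_gam2_sq (hμ : 0 < μ) (hσ : σ ≠ 0) (hρ : 0 < ρ) :
    gam1 μ σ ρ ^ 2 < gam2 μ σ ρ ^ 2 := by
  have hsum : gam1 μ σ ρ + gam2 μ σ ρ < 0 := by
    have : 0 < μ / σ ^ 2 := by positivity
    unfold gam1 gam2
    linarith
  nlinarith [gam1_pos (μ := μ) hσ hρ, gam2_neg (μ := μ) hσ hρ]

theorem bstar_pos (hμ : 0 < μ) (hσ : σ ≠ 0) (hρ : 0 < ρ) : 0 < bstar μ σ ρ :=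
  div_pos (log_pos ((one_lt_div (pow_pos (gam1_pos hσ hρ) 2)).mpr (gam1_sq_lt_gam2_sq hμ hσ hρ)))
    (by linarith [gam1_pos (μ := μ) hσ hρ, gam2_neg (μ := μ) hσ hρ])

end Roots

section ValueFunction

variable {μ σ ρ : ℝ}

local notation "δ" => expSubDeriv (gam1 μ σ ρ) (gam2 μ σ ρ)

theorem Vfun_eq_tangentExtension (hD : δ 1 (bstar μ σ ρ) ≠ 0) :
    Vfun μ σ ρ = fun x =>
      tangentExtension (δ 0) (δ 1 (bstar μ σ ρ)) (bstar μ σ ρ) x / δ 1 (bstar μ σ ρ) := by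
  funext x
  unfold Vfun tangentExtension
  split_ifs with h
  · simp [min_eq_left h.le, expSubDeriv]
  · rw [min_eq_right (not_lt.mp h), add_div, mul_div_cancel_left₀ _ hD]
    simp [expSubDeriv]
    ring

theorem hasDerivAt_Vfun (hD : δ 1 (bstar μ σ ρ) ≠ 0) (x : ℝ) :
    HasDerivAt (Vfun μ σ ρ) (δ 1 (min x (bstar μ σ ρ)) / δ 1 (bstar μ σ ρ)) x := by
  rw [Vfun_eq_tangentExtension hD]
  exact (hasDerivAt_tangentExtension (hasDerivAt_expSubDeriv _ _ 0) x).div_const _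

theorem Vfun_ode (hσ : σ ≠ 0) (hρ : 0 ≤ ρ) (hD : δ 1 (bstar μ σ ρ) ≠ 0) {x : ℝ}
    (hx : x ≤ bstar μ σ ρ) :
    σ ^ 2 / 2 * (δ 2 x / δ 1 (bstar μ σ ρ)) + μ * (δ 1 x / δ 1 (bstar μ σ ρ))
      - ρ * Vfun μ σ ρ x = 0 := by
  have hV : Vfun μ σ ρ x = δ 0 x / δ 1 (bstar μ σ ρ) := by
    simp [Vfun_eq_tangentExtension hD, tangentExtension, min_eq_left hx]
  rw [hV]
  linear_combination
    expSubDeriv_ode (charPoly_gam1 hσ hρ) (charPoly_gam2 hσ hρ) x / δ 1 (bstar μ σ ρ)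

theorem expSubDeriv_two_bstar (hσ : σ ≠ 0) (hρ : 0 < ρ) : δ 2 (bstar μ σ ρ) = 0 :=
  expSubDeriv_two_log_div_eq_zero (gam1_pos hσ hρ).ne' (gam2_neg hσ hρ).ne
    ((gam2_neg hσ hρ).trans (gam1_pos hσ hρ)).ne'

end ValueFunction

theorem stmt3_general (μ σ : ℝ) (hμ : 0 < μ) (hσ : 0 < σ) (ρ : ℝ) (hρ : 0 < ρ) :
    (∀ x ∈ Set.Ioo 0 (bstar μ σ ρ),
      σ^2/2 * deriv (deriv (Vfun μ σ ρ)) x + μ * deriv (Vfun μ σ ρ) x - ρ * Vfun μ σ ρ x = 0) ∧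
    Vfun μ σ ρ 0 = 0 ∧
    ContDiffOn ℝ 2 (Vfun μ σ ρ) (Set.Ioi 0) ∧
    Filter.Tendsto (deriv (Vfun μ σ ρ))
      (nhdsWithin (bstar μ σ ρ) (Set.Iio (bstar μ σ ρ))) (nhds 1) ∧
    Filter.Tendsto (deriv (deriv (Vfun μ σ ρ)))
      (nhdsWithin (bstar μ σ ρ) (Set.Iio (bstar μ σ ρ))) (nhds 0) ∧
    (∀ x, bstar μ σ ρ < x → deriv (Vfun μ σ ρ) x = 1 ∧ deriv (deriv (Vfun μ σ ρ)) x = 0) := by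
  set b := bstar μ σ ρ
  set δ := expSubDeriv (gam1 μ σ ρ) (gam2 μ σ ρ)
  have hD : 0 < δ 1 b := expSubDeriv_one_pos (gam1_pos hσ.ne' hρ) (gam2_neg hσ.ne' hρ) b
  have hδ₂ : δ 2 b = 0 := expSubDeriv_two_bstar hσ.ne' hρ
  have hV' : deriv (Vfun μ σ ρ) = fun x => δ 1 (min x b) / δ 1 b :=
    funext fun x => (hasDerivAt_Vfun hD.ne' x).deriv
  have hV'_deriv (x : ℝ) :
      HasDerivAt (fun x => δ 1 (min x b) / δ 1 b) (δ 2 (min x b) / δ 1 b) x :=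
    (hasDerivAt_comp_min_of_deriv_eq_zero (hasDerivAt_expSubDeriv _ _ 1) hδ₂ x).div_const _
  have hV'' : deriv (deriv (Vfun μ σ ρ)) = fun x => δ 2 (min x b) / δ 1 b := by
    rw [hV']
    exact funext fun x => (hV'_deriv x).deriv
  have hcont : Continuous fun x => δ 2 (min x b) / δ 1 b :=
    ((continuous_expSubDeriv _ _ 2).comp (continuous_id.min continuous_const)).div_const _
  refine ⟨fun x hx => ?_, ?_, ?_, ?_, ?_, fun x hx => ?_⟩
  · rw [hV'', hV']
    simp only [min_eq_left hx.2.le]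
    exact Vfun_ode hσ.ne' hρ.le hD.ne' hx.2.le
  · simp [Vfun_eq_tangentExtension hD.ne', tangentExtension, min_eq_left (bstar_pos hμ hσ.ne' hρ).le, expSubDeriv]
  · exact (contDiff_two_of_hasDerivAt (hasDerivAt_Vfun hD.ne') hV'_deriv hcont).contDiffOn
  · simpa [hV', hD.ne'] using (hV'_deriv b).continuousAt.tendsto.mono_left nhdsWithin_le_nhds
  · simpa [hV'', hδ₂] using (hcont.tendsto b).mono_left nhdsWithin_le_nhds
  · rw [hV'', hV']
    simp [min_eq_right hx.le, hD.ne', hδ₂]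

/-- `V_ρ` solves the ODE on `(0,b*_ρ)`, vanishes at `0`, is `C²` on `(0,∞)`,
with one-sided limits `V'(b*_ρ−)=1` and `V''(b*_ρ−)=0`, matching `V'≡1`, `V''≡0` on
`(b*_ρ,∞)`. -/
theorem stmt3 (μ σ r q : ℝ) (hμ : 0 < μ) (hσ : 0 < σ) (hr : 0 < r) (hq : 0 < q)
    (ρ : ℝ) (hρ : 0 < ρ) :
    (∀ x ∈ Set.Ioo 0 (bstar μ σ ρ),
      σ^2/2 * deriv (deriv (Vfun μ σ ρ)) x + μ * deriv (Vfun μ σ ρ) x - ρ * Vfun μ σ ρ x = 0) ∧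
    Vfun μ σ ρ 0 = 0 ∧
    ContDiffOn ℝ 2 (Vfun μ σ ρ) (Set.Ioi 0) ∧
    Filter.Tendsto (deriv (Vfun μ σ ρ))
      (nhdsWithin (bstar μ σ ρ) (Set.Iio (bstar μ σ ρ))) (nhds 1) ∧
    Filter.Tendsto (deriv (deriv (Vfun μ σ ρ)))
      (nhdsWithin (bstar μ σ ρ) (Set.Iio (bstar μ σ ρ))) (nhds 0) ∧
    (∀ x, bstar μ σ ρ < x → deriv (Vfun μ σ ρ) x = 1 ∧ deriv (deriv (Vfun μ σ ρ)) x = 0) :=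
  stmt3_general μ σ hμ hσ ρ hρ
end

section
/- Let ρ > 0 and x̄ ≥ 0, and let f : [x̄,∞) → ℝ be twice continuously differentiable with (σ²/2)f''(x) + μ·f'(x) − ρ·f(x) = 0 for all x > x̄, f(x̄) ≥ 0 and f'(x̄) > 0. Then f'(x) > 0 for all x > x̄; in particular f is strictly increasing on (x̄,∞). -/
open Real Set Filter

/-!
If `f'` had a zero after `x̄`, let `c` be the first one. Since `f' > 0` on `(x̄, c)`, `f` increases
there, so `f c > f x̄ ≥ 0` and the ODE at `c` reads `(σ²/2) f''(c) = ρ f(c) > 0`. But `f'` is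
positive to the left of its zero `c`, which forces `f''(c) ≤ 0`.
-/

open Topology

theorem exists_first_zero_of_continuousOn {g : ℝ → ℝ} {a b : ℝ} (hab : a ≤ b)
    (hg : ContinuousOn g (Icc a b)) (ha : 0 < g a) (hb : g b ≤ 0) :
    ∃ c ∈ Ioc a b, g c = 0 ∧ ∀ x ∈ Ico a c, 0 < g x := by
  set T := Icc a b ∩ g ⁻¹' Iic 0
  have hT : IsCompact T :=
    isCompact_Icc.of_isClosed_subset (hg.preimage_isClosed_of_isClosed isClosed_Icc isClosed_Iic)
      inter_subset_left
  have hcT : sInf T ∈ T := hT.sInf_mem ⟨b, right_mem_Icc.2 hab, hb⟩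
  set c := sInf T
  have hac : a < c := hcT.1.1.lt_of_ne fun h => (h ▸ ha).not_ge hcT.2
  have hbefore : ∀ x ∈ Ico a c, 0 < g x := fun x hx => by
    by_contra! hgx
    exact (csInf_le hT.bddBelow ⟨⟨hx.1, hx.2.le.trans hcT.1.2⟩, hgx⟩).not_gt hx.2
  obtain ⟨z, hz, hgz⟩ : ∃ z ∈ Icc a c, g z = 0 :=
    intermediate_value_Icc' hac.le (hg.mono (Icc_subset_Icc_right hcT.1.2)) ⟨hcT.2, ha.le⟩
  have hcz : c ≤ z := csInf_le hT.bddBelow ⟨⟨hz.1, hz.2.trans hcT.1.2⟩, hgz.le⟩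
  exact ⟨c, ⟨hac, hcT.1.2⟩, le_antisymm hz.2 hcz ▸ hgz, hbefore⟩

theorem deriv_nonpos_of_eq_zero_of_pos_left {g : ℝ → ℝ} {a c : ℝ} (hac : a < c)
    (hc : g c = 0) (hpos : ∀ x ∈ Ioo a c, 0 < g x) : deriv g c ≤ 0 := by
  by_contra! hderiv
  have hsign : ∀ᶠ x in 𝓝[<] c, SignType.sign (g x) = SignType.sign (x - c) :=
    nhdsWithin_le_nhds (eventually_nhdsWithin_sign_eq_of_deriv_pos hderiv hc)
  obtain ⟨x, hx, hxI⟩ := (hsign.and (Ioo_mem_nhdsLT hac)).exists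
  rw [sign_pos (hpos x hxI), sign_neg (sub_neg.2 hxI.2)] at hx
  exact absurd hx (by decide)

theorem deriv_pos_of_deriv_deriv_pos_at_critical {f : ℝ → ℝ} {a : ℝ}
    (hf : ContDiffOn ℝ 1 f (Ici a))
    (hcrit : ∀ x, a < x → deriv f x = 0 → 0 < f x → 0 < deriv (deriv f) x)
    (ha0 : 0 ≤ f a) (ha1 : 0 < derivWithin f (Ici a) a) {x : ℝ} (hx : a < x) :
    0 < deriv f x := by
  set g := derivWithin f (Ici a)
  have hg : ContinuousOn g (Ici a) := hf.continuousOn_derivWithin (uniqueDiffOn_Ici a) le_rfl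
  have hderiv : ∀ y, a < y → deriv f y = g y := fun y hy =>
    (derivWithin_of_mem_nhds (Ici_mem_nhds hy)).symm
  by_contra! hx0
  obtain ⟨c, hc, hgc, hgpos⟩ := exists_first_zero_of_continuousOn hx.le
    (hg.mono Icc_subset_Ici_self) ha1 (hderiv x hx ▸ hx0)
  have hpos : ∀ y ∈ Ioo a c, 0 < deriv f y := fun y hy =>
    hderiv y hy.1 ▸ hgpos y ⟨hy.1.le, hy.2⟩
  have hfc : f a < f c :=
    strictMonoOn_of_deriv_pos (convex_Icc a c) (hf.continuousOn.mono Icc_subset_Ici_self)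
      (by simpa only [interior_Icc] using hpos) (left_mem_Icc.2 hc.1.le)
      (right_mem_Icc.2 hc.1.le) hc.1
  have hc0 : deriv f c = 0 := (hderiv c hc.1).trans hgc
  exact (deriv_nonpos_of_eq_zero_of_pos_left hc.1 hc0 hpos).not_gt
    (hcrit c hc.1 hc0 (ha0.trans_lt hfc))

theorem stmt6_general (μ σ : ℝ)
    (ρ : ℝ) (hρ : 0 < ρ) (xbar : ℝ)
    (f : ℝ → ℝ) (hf : ContDiffOn ℝ 2 f (Set.Ici xbar))
    (hODE : ∀ x, xbar < x → σ^2/2 * deriv (deriv f) x + μ * deriv f x - ρ * f x = 0)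
    (hf0 : 0 ≤ f xbar) (hf1 : 0 < derivWithin f (Set.Ici xbar) xbar) :
    (∀ x, xbar < x → 0 < deriv f x) ∧ StrictMonoOn f (Set.Ioi xbar) := by
  have hcrit : ∀ x, xbar < x → deriv f x = 0 → 0 < f x → 0 < deriv (deriv f) x := by
    intro x hx hf'x hfx
    have hode := hODE x hx
    rw [hf'x] at hode
    by_contra! hle
    nlinarith [mul_nonpos_of_nonneg_of_nonpos (sq_nonneg σ) hle, mul_pos hρ hfx]
  have hpos : ∀ x ∈ Ioi xbar, 0 < deriv f x := fun x hx =>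
    deriv_pos_of_deriv_deriv_pos_at_critical (hf.of_le one_le_two) hcrit hf0 hf1 hx
  refine ⟨hpos, strictMonoOn_of_deriv_pos (convex_Ioi xbar)
    (hf.continuousOn.mono Ioi_subset_Ici_self) ?_⟩
  simpa only [interior_Ioi] using hpos

/-- if `f` is `C²` on `[x̄,∞)`, solves the ODE on `(x̄,∞)`, with `f(x̄) ≥ 0`
and `f'(x̄) > 0`, then `f' > 0` on `(x̄,∞)`; in particular `f` is strictly increasing there. -/
theorem stmt6 (μ σ : ℝ) (hμ : 0 < μ) (hσ : 0 < σ)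
    (ρ : ℝ) (hρ : 0 < ρ) (xbar : ℝ) (hxbar : 0 ≤ xbar)
    (f : ℝ → ℝ) (hf : ContDiffOn ℝ 2 f (Set.Ici xbar))
    (hODE : ∀ x, xbar < x → σ^2/2 * deriv (deriv f) x + μ * deriv f x - ρ * f x = 0)
    (hf0 : 0 ≤ f xbar) (hf1 : 0 < derivWithin f (Set.Ici xbar) xbar) :
    (∀ x, xbar < x → 0 < deriv f x) ∧ StrictMonoOn f (Set.Ioi xbar) :=
  stmt6_general μ σ ρ hρ xbar f hf hODE hf0 hf1
end

section
/- There exists a unique y_l ∈ (0, y_u) with f(y_l) = 0, and this y_l satisfies y_l ∈ (b*_{r+q}, y_u). Moreover K₁(y)·δ'(b*_{r+q}) > 1 for all y ∈ (b*_{r+q}, y_l) and K₁(y)·δ'(b*_{r+q}) < 1 for all y ∈ (y_l, y_u]. -/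
open Real Set Filter

/-!
With `b = γ₁(r)`, `c = -γ₂(r)`, `p = b/(b+c)`, put `u = (δ' - bδ)/b²` and `v = (δ' + cδ)/c²`,
both positive sums of two exponentials. Then `δ' = bc (p u + (1-p) v)` is `bc` times an arithmetic
mean, while the first term of `f` is the geometric mean `G = bc u^p v^(1-p)`, and `K₁ = 1/G`.
So everything is about where `G` crosses the level `δ'(b*_{r+q})`.

`log G` is strictly convex, since the logarithmic derivative of a positive two-exponential sum
increases, and `(log G)'(0) = 0`; hence `G` increases strictly on `[0, ∞)`. At `b*_{r+q}`,
where `δ'' = 0`, AM-GM gives `G < δ'`. Conversely, the elementary bound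
`log m - Σ wᵢ log xᵢ < m Σ wᵢ/xᵢ - 1` on the AM-GM gap turns out to equal exactly
`(log G)'(b*) (y_u - b*)`, which by strict convexity is less than `log G(y_u) - log G(b*)`;
so `G(y_u) > δ'(b*)`. The intermediate value theorem and monotonicity finish the proof.
-/

noncomputable def expSum (A B g₁ g₂ y : ℝ) : ℝ := A * exp (g₁ * y) + B * exp (g₂ * y)

section ExpSum

variable {A B g₁ g₂ : ℝ}

lemma expSum_pos (hA : 0 < A) (hB : 0 < B) (y : ℝ) : 0 < expSum A B g₁ g₂ y := by
  unfold expSum; positivity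

lemma hasDerivAt_expSum (A B g₁ g₂ y : ℝ) :
    HasDerivAt (expSum A B g₁ g₂) (expSum (A * g₁) (B * g₂) g₁ g₂ y) y := by
  have h₁ := ((hasDerivAt_id y).const_mul g₁).exp.const_mul A
  have h₂ := ((hasDerivAt_id y).const_mul g₂).exp.const_mul B
  exact (h₁.add h₂).congr_deriv (by simp only [expSum, id]; ring)

lemma logDeriv_expSum (A B g₁ g₂ y : ℝ) :
    logDeriv (expSum A B g₁ g₂) y = expSum (A * g₁) (B * g₂) g₁ g₂ y / expSum A B g₁ g₂ y := by
  rw [logDeriv_apply, (hasDerivAt_expSum A B g₁ g₂ y).deriv]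

lemma strictMono_logDeriv_expSum (hA : 0 < A) (hB : 0 < B) (hg : g₂ < g₁) :
    StrictMono (logDeriv (expSum A B g₁ g₂)) := by
  intro y₁ y₂ hy
  simp only [logDeriv_expSum]
  rw [div_lt_div_iff₀ (expSum_pos hA hB y₁) (expSum_pos hA hB y₂), ← sub_neg]
  have hcross : exp (g₁ * y₁) * exp (g₂ * y₂) < exp (g₁ * y₂) * exp (g₂ * y₁) := by
    rw [← exp_add, ← exp_add, exp_lt_exp]
    nlinarith
  calc _ = A * B * (g₁ - g₂) *
        (exp (g₁ * y₁) * exp (g₂ * y₂) - exp (g₁ * y₂) * exp (g₂ * y₁)) := by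
        simp only [expSum]; ring
    _ < 0 := mul_neg_of_pos_of_neg (by have := sub_pos.2 hg; positivity) (sub_neg.2 hcross)

lemma sq_mul_exp_eq_of_eq_log_div (hg : g₁ ≠ g₂) (hg₁ : g₁ ≠ 0) (hg₂ : g₂ ≠ 0) :
    g₁ ^ 2 * exp (g₁ * (log (g₂ ^ 2 / g₁ ^ 2) / (g₁ - g₂))) =
      g₂ ^ 2 * exp (g₂ * (log (g₂ ^ 2 / g₁ ^ 2) / (g₁ - g₂))) := by
  have hsplit : g₁ * (log (g₂ ^ 2 / g₁ ^ 2) / (g₁ - g₂)) =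
      log (g₂ ^ 2 / g₁ ^ 2) + g₂ * (log (g₂ ^ 2 / g₁ ^ 2) / (g₁ - g₂)) := by
    field_simp [sub_ne_zero.2 hg]; ring
  rw [hsplit, exp_add, exp_log (by positivity)]
  field_simp

lemma expSum_of_sq_mul_exp_eq {s : ℝ} (hs : g₁ ^ 2 * exp (g₁ * s) = g₂ ^ 2 * exp (g₂ * s))
    (hg₁ : g₁ ≠ 0) (A B : ℝ) :
    expSum A B g₁ g₂ s = exp (g₂ * s) * (A * g₂ ^ 2 + B * g₁ ^ 2) / g₁ ^ 2 := by
  have : exp (g₁ * s) = g₂ ^ 2 * exp (g₂ * s) / g₁ ^ 2 := by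
    rw [eq_div_iff (pow_ne_zero 2 hg₁)]; linear_combination hs
  rw [expSum, this]; field_simp

end ExpSum

lemma log_weightedMean_sub_lt {w₁ w₂ x₁ x₂ : ℝ} (hw₁ : 0 < w₁) (hw₂ : 0 < w₂) (hw : w₁ + w₂ = 1)
    (hx₁ : 0 < x₁) (hx₂ : 0 < x₂) (hx : x₁ ≠ x₂) :
    log (w₁ * x₁ + w₂ * x₂) - (w₁ * log x₁ + w₂ * log x₂) <
      (w₁ * x₁ + w₂ * x₂) * (w₁ / x₁ + w₂ / x₂) - 1 := by
  set m := w₁ * x₁ + w₂ * x₂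
  have hm : 0 < m := by positivity
  have hm₁ : m / x₁ ≠ 1 := by
    rw [Ne, div_eq_one_iff_eq hx₁.ne']
    intro h
    exact hx (by nlinarith)
  have h₁ := log_lt_sub_one_of_pos (div_pos hm hx₁) hm₁
  have h₂ := log_le_sub_one_of_pos (div_pos hm hx₂)
  rw [log_div hm.ne' hx₁.ne'] at h₁
  rw [log_div hm.ne' hx₂.ne'] at h₂
  have e : m * (w₁ / x₁ + w₂ / x₂) - 1 = w₁ * (m / x₁ - 1) + w₂ * (m / x₂ - 1) := by
    linear_combination hw
  have hlog : log m = w₁ * log m + w₂ * log m := by rw [← add_mul, hw, one_mul]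
  rw [e]
  nlinarith [mul_lt_mul_of_pos_left h₁ hw₁, mul_le_mul_of_nonneg_left h₂ hw₂.le]

namespace Barrier

noncomputable def bst (g₁ g₂ : ℝ) : ℝ := log (g₂ ^ 2 / g₁ ^ 2) / (g₁ - g₂)

noncomputable def u (b g₁ g₂ : ℝ) : ℝ → ℝ := expSum ((g₁ - b) / b ^ 2) ((b - g₂) / b ^ 2) g₁ g₂

noncomputable def v (c g₁ g₂ : ℝ) : ℝ → ℝ := expSum ((g₁ + c) / c ^ 2) ((-c - g₂) / c ^ 2) g₁ g₂

noncomputable def gap (b c Q : ℝ) : ℝ := (c - b) * Q / (b * c * (Q + b * c))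

noncomputable def logG (b c g₁ g₂ y : ℝ) : ℝ :=
  log (b * c) + b / (b + c) * log (u b g₁ g₂ y) + c / (b + c) * log (v c g₁ g₂ y)

noncomputable def logGDeriv (b c g₁ g₂ y : ℝ) : ℝ :=
  b / (b + c) * logDeriv (u b g₁ g₂) y + c / (b + c) * logDeriv (v c g₁ g₂) y

/-- The relations between `b = γ₁(r)`, `c = -γ₂(r)`, `g₁ = γ₁(r+q)`, `g₂ = γ₂(r+q)` and
`Q = 2q/σ²` (Vieta for `σ²x²/2 + μx - ρ = 0` at `ρ = r` and `ρ = r + q`). -/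
structure Roots (b c g₁ g₂ Q : ℝ) : Prop where
  pos : 0 < b
  lt : b < c
  lt_g₁ : b < g₁
  add_eq : g₁ + g₂ = b - c
  mul_eq : g₁ * g₂ = -(Q + b * c)
  Q_pos : 0 < Q

namespace Roots

variable {b c g₁ g₂ Q : ℝ} (H : Roots b c g₁ g₂ Q)
include H

lemma c_pos : 0 < c := H.pos.trans H.lt

lemma g₁_pos : 0 < g₁ := H.pos.trans H.lt_g₁

lemma g₂_lt : g₂ < -c := by linarith [H.add_eq, H.lt_g₁]

lemma g₂_neg : g₂ < 0 := by linarith [H.g₂_lt, H.c_pos]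

lemma g₂_lt_g₁ : g₂ < g₁ := H.g₂_neg.trans H.g₁_pos

lemma u_coeffs_pos : 0 < (g₁ - b) / b ^ 2 ∧ 0 < (b - g₂) / b ^ 2 :=
  ⟨div_pos (by linarith [H.lt_g₁]) (pow_pos H.pos 2),
    div_pos (by linarith [H.g₂_neg, H.pos]) (pow_pos H.pos 2)⟩

lemma v_coeffs_pos : 0 < (g₁ + c) / c ^ 2 ∧ 0 < (-c - g₂) / c ^ 2 :=
  ⟨div_pos (by linarith [H.g₁_pos, H.c_pos]) (pow_pos H.c_pos 2),
    div_pos (by linarith [H.g₂_lt]) (pow_pos H.c_pos 2)⟩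

lemma u_pos (y : ℝ) : 0 < u b g₁ g₂ y := expSum_pos H.u_coeffs_pos.1 H.u_coeffs_pos.2 y

lemma v_pos (y : ℝ) : 0 < v c g₁ g₂ y := expSum_pos H.v_coeffs_pos.1 H.v_coeffs_pos.2 y

lemma weights_pos : 0 < b / (b + c) ∧ 0 < c / (b + c) :=
  ⟨div_pos H.pos (by linarith [H.pos, H.c_pos]), div_pos H.c_pos (by linarith [H.pos, H.c_pos])⟩

lemma weights_add : b / (b + c) + c / (b + c) = 1 := by
  rw [← add_div, div_self (by linarith [H.pos, H.c_pos])]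

lemma expSum_eq_mul_weightedMean (y : ℝ) : expSum g₁ (-g₂) g₁ g₂ y =
    b * c * (b / (b + c) * u b g₁ g₂ y + c / (b + c) * v c g₁ g₂ y) := by
  have := H.pos; have := H.c_pos
  simp only [u, v, expSum]
  field_simp
  ring

lemma hasDerivAt_logG (y : ℝ) : HasDerivAt (logG b c g₁ g₂) (logGDeriv b c g₁ g₂ y) y := by
  have hu := ((hasDerivAt_expSum _ _ g₁ g₂ y).log (H.u_pos y).ne').const_mul (b / (b + c))
  have hv := ((hasDerivAt_expSum _ _ g₁ g₂ y).log (H.v_pos y).ne').const_mul (c / (b + c))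
  exact ((hu.const_add (log (b * c))).add hv).congr_deriv
    (by simp only [logGDeriv, logDeriv_expSum, u, v])

lemma strictMono_logGDeriv : StrictMono (logGDeriv b c g₁ g₂) := by
  have := H.pos; have := H.c_pos
  intro y₁ y₂ hy
  have hu := strictMono_logDeriv_expSum H.u_coeffs_pos.1 H.u_coeffs_pos.2 H.g₂_lt_g₁ hy
  have hv := strictMono_logDeriv_expSum H.v_coeffs_pos.1 H.v_coeffs_pos.2 H.g₂_lt_g₁ hy
  unfold logGDeriv u v
  gcongr

lemma logGDeriv_zero : logGDeriv b c g₁ g₂ 0 = 0 := by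
  have := H.pos; have := H.c_pos; have := sub_pos.2 H.g₂_lt_g₁
  simp only [logGDeriv, u, v, logDeriv_expSum, expSum, mul_zero, exp_zero, mul_one]
  rw [← add_div, ← add_div, show g₁ - b + (b - g₂) = g₁ - g₂ by ring,
    show g₁ + c + (-c - g₂) = g₁ - g₂ by ring]
  field_simp
  linear_combination (g₁ - g₂) * (b + c) * H.add_eq

lemma expSum_neg_pos (y : ℝ) : 0 < expSum g₁ (-g₂) g₁ g₂ y :=
  expSum_pos H.g₁_pos (neg_pos.2 H.g₂_neg) y

lemma continuous_logG : Continuous (logG b c g₁ g₂) :=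
  continuous_iff_continuousAt.2 fun y => (H.hasDerivAt_logG y).continuousAt

lemma strictConvexOn_logG : StrictConvexOn ℝ univ (logG b c g₁ g₂) := by
  have hderiv : deriv (logG b c g₁ g₂) = logGDeriv b c g₁ g₂ :=
    funext fun y => (H.hasDerivAt_logG y).deriv
  exact StrictMono.strictConvexOn_univ_of_deriv H.continuous_logG (hderiv ▸ H.strictMono_logGDeriv)

lemma logGDeriv_mul_lt_sub {a y : ℝ} (hay : a < y) :
    logGDeriv b c g₁ g₂ a * (y - a) < logG b c g₁ g₂ y - logG b c g₁ g₂ a := by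
  have := H.strictConvexOn_logG.lt_slope_of_hasDerivAt trivial trivial hay (H.hasDerivAt_logG a)
  rwa [slope_def_field, lt_div_iff₀ (sub_pos.2 hay)] at this

lemma strictMonoOn_logG : StrictMonoOn (logG b c g₁ g₂) (Ici 0) := by
  intro a ha y _ hay
  have hslope : 0 ≤ logGDeriv b c g₁ g₂ a := H.logGDeriv_zero ▸ H.strictMono_logGDeriv.monotone ha
  nlinarith [H.logGDeriv_mul_lt_sub hay, sub_pos.2 hay]

lemma bst_pos : 0 < bst g₁ g₂ := by
  have hg : g₁ < -g₂ := by linarith [H.add_eq, H.lt]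
  have : 1 < g₂ ^ 2 / g₁ ^ 2 := by
    rw [one_lt_div (pow_pos H.g₁_pos 2)]; nlinarith [H.g₁_pos]
  exact div_pos (log_pos this) (sub_pos.2 H.g₂_lt_g₁)

lemma expSum_bst (A B : ℝ) :
    expSum A B g₁ g₂ (bst g₁ g₂) = exp (g₂ * bst g₁ g₂) * (A * g₂ ^ 2 + B * g₁ ^ 2) / g₁ ^ 2 :=
  expSum_of_sq_mul_exp_eq
    (sq_mul_exp_eq_of_eq_log_div H.g₂_lt_g₁.ne' H.g₁_pos.ne' H.g₂_neg.ne) H.g₁_pos.ne' A B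

lemma u_bst : u b g₁ g₂ (bst g₁ g₂) =
    exp (g₂ * bst g₁ g₂) * (g₁ - g₂) / g₁ ^ 2 * ((Q + b ^ 2) / b ^ 2) := by
  have := H.pos; have := H.g₁_pos
  rw [u, H.expSum_bst]
  field_simp
  linear_combination (g₁ - g₂) * (b * H.add_eq - H.mul_eq)

lemma v_bst : v c g₁ g₂ (bst g₁ g₂) =
    exp (g₂ * bst g₁ g₂) * (g₁ - g₂) / g₁ ^ 2 * ((Q + c ^ 2) / c ^ 2) := by
  have := H.c_pos; have := H.g₁_pos
  rw [v, H.expSum_bst]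
  field_simp
  linear_combination (g₁ - g₂) * (-c * H.add_eq - H.mul_eq)

lemma logDeriv_u_bst :
    logDeriv (u b g₁ g₂) (bst g₁ g₂) = -(b * (Q + b * c)) / (Q + b ^ 2) := by
  have := H.pos; have := H.g₁_pos; have := H.Q_pos; have := sub_pos.2 H.g₂_lt_g₁
  rw [u, logDeriv_expSum, ← u, H.u_bst, H.expSum_bst]
  field_simp
  linear_combination b * (g₁ - g₂) * H.mul_eq

lemma logDeriv_v_bst :
    logDeriv (v c g₁ g₂) (bst g₁ g₂) = c * (Q + b * c) / (Q + c ^ 2) := by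
  have := H.c_pos; have := H.g₁_pos; have := H.Q_pos; have := sub_pos.2 H.g₂_lt_g₁
  rw [v, logDeriv_expSum, ← v, H.v_bst, H.expSum_bst]
  field_simp
  linear_combination -c * (g₁ - g₂) * H.mul_eq

lemma v_bst_lt_u_bst : v c g₁ g₂ (bst g₁ g₂) < u b g₁ g₂ (bst g₁ g₂) := by
  have := H.pos; have := H.c_pos; have := H.g₁_pos; have := H.Q_pos
  have hK : 0 < exp (g₂ * bst g₁ g₂) * (g₁ - g₂) / g₁ ^ 2 := by
    have := sub_pos.2 H.g₂_lt_g₁; positivity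
  rw [H.u_bst, H.v_bst]
  refine mul_lt_mul_of_pos_left ?_ hK
  rw [div_lt_div_iff₀ (by positivity) (by positivity)]
  nlinarith [mul_lt_mul_of_pos_left (pow_lt_pow_left₀ H.lt H.pos.le two_ne_zero) H.Q_pos]

lemma exp_logG_bst_lt :
    exp (logG b c g₁ g₂ (bst g₁ g₂)) < expSum g₁ (-g₂) g₁ g₂ (bst g₁ g₂) := by
  rw [← lt_log_iff_exp_lt (H.expSum_neg_pos _)]
  have := H.pos; have := H.c_pos
  have hu := H.u_pos (bst g₁ g₂); have hv := H.v_pos (bst g₁ g₂)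
  have hjensen := strictConcaveOn_log_Ioi.2 (mem_Ioi.2 hu) (mem_Ioi.2 hv) H.v_bst_lt_u_bst.ne'
    H.weights_pos.1 H.weights_pos.2 H.weights_add
  simp only [smul_eq_mul] at hjensen
  rw [H.expSum_eq_mul_weightedMean, log_mul (by positivity) (by positivity), logG, add_assoc]
  linarith

lemma gap_pos : 0 < gap b c Q := by
  have := H.pos; have := H.c_pos; have := H.Q_pos
  exact div_pos (mul_pos (sub_pos.2 H.lt) H.Q_pos) (by positivity)

lemma expSum_bst_lt_exp_logG :
    expSum g₁ (-g₂) g₁ g₂ (bst g₁ g₂) <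
      exp (logG b c g₁ g₂ (bst g₁ g₂ + gap b c Q)) := by
  rw [← log_lt_iff_lt_exp (H.expSum_neg_pos _)]
  have := H.pos; have := H.c_pos; have := H.Q_pos
  set s := bst g₁ g₂
  have hu := H.u_pos s; have hv := H.v_pos s
  have hgap := log_weightedMean_sub_lt H.weights_pos.1 H.weights_pos.2 H.weights_add hu hv
    H.v_bst_lt_u_bst.ne'
  have htangent := H.logGDeriv_mul_lt_sub (lt_add_of_pos_right s H.gap_pos)
  have hgap_eq : (b / (b + c) * u b g₁ g₂ s + c / (b + c) * v c g₁ g₂ s) *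
      (b / (b + c) / u b g₁ g₂ s + c / (b + c) / v c g₁ g₂ s) - 1 =
      logGDeriv b c g₁ g₂ s * (s + gap b c Q - s) := by
    have := H.g₁_pos; have := sub_pos.2 H.g₂_lt_g₁
    rw [logGDeriv, H.logDeriv_u_bst, H.logDeriv_v_bst, H.u_bst, H.v_bst, gap]
    field_simp
    ring
  rw [H.expSum_eq_mul_weightedMean, log_mul (by positivity) (by positivity)]
  have hs : logG b c g₁ g₂ s = log (b * c) + (b / (b + c) * log (u b g₁ g₂ s) +
      c / (b + c) * log (v c g₁ g₂ s)) := by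
    rw [logG, add_assoc]
  linarith

end Roots

end Barrier

section Parameters

open Barrier

variable {μ σ r q Q : ℝ}

lemma roots_gam (hμ : 0 < μ) (hσ : 0 < σ) (hr : 0 < r) (hq : 0 < q) :
    Roots (gam1 μ σ r) (-gam2 μ σ r) (gam1 μ σ (r + q)) (gam2 μ σ (r + q)) (2 * q / σ ^ 2) := by
  have hm : 0 < μ / σ ^ 2 := by positivity
  have hsq : (μ / σ ^ 2) ^ 2 = μ ^ 2 / σ ^ 4 := by field_simp
  have hs₁ := sq_sqrt (by positivity : (0 : ℝ) ≤ μ ^ 2 / σ ^ 4 + 2 * r / σ ^ 2)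
  have hs₂ := sq_sqrt (by positivity : (0 : ℝ) ≤ μ ^ 2 / σ ^ 4 + 2 * (r + q) / σ ^ 2)
  have hm_lt : μ / σ ^ 2 < sqrt (μ ^ 2 / σ ^ 4 + 2 * r / σ ^ 2) := by
    rw [← sqrt_sq hm.le, hsq]
    exact sqrt_lt_sqrt (by positivity) (lt_add_of_pos_right _ (by positivity))
  have hsqrt_lt :
      sqrt (μ ^ 2 / σ ^ 4 + 2 * r / σ ^ 2) < sqrt (μ ^ 2 / σ ^ 4 + 2 * (r + q) / σ ^ 2) :=
    sqrt_lt_sqrt (by positivity) (by gcongr; linarith)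
  refine ⟨?_, ?_, ?_, ?_, ?_, by positivity⟩ <;> unfold gam1 <;> try unfold gam2
  · linarith
  · linarith
  · linarith
  · ring
  · linear_combination hs₁ - hs₂

lemma delP_eq_expSum (y : ℝ) : delP μ σ r q y =
    expSum (gam1 μ σ (r + q)) (-gam2 μ σ (r + q)) (gam1 μ σ (r + q)) (gam2 μ σ (r + q)) y := by
  unfold delP expSum; ring

lemma delP_sub_mul_del {β : ℝ} (hβ : β ≠ 0) (y : ℝ) :
    delP μ σ r q y - β * del μ σ r q y = β ^ 2 * u β (gam1 μ σ (r + q)) (gam2 μ σ (r + q)) y := by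
  unfold delP del u expSum; field_simp; ring

lemma delP_add_mul_del {β : ℝ} (hβ : β ≠ 0) (y : ℝ) :
    delP μ σ r q y + β * del μ σ r q y = β ^ 2 * v β (gam1 μ σ (r + q)) (gam2 μ σ (r + q)) y := by
  unfold delP del v expSum; field_simp; ring

lemma yUpper_eq (hσ : 0 < σ) (hr : 0 < r) (hq : 0 < q) :
    yUpper μ σ r q = bstar μ σ (r + q) + gap (gam1 μ σ r) (-gam2 μ σ r) (2 * q / σ ^ 2) := by
  have hs := sq_sqrt (by positivity : (0 : ℝ) ≤ μ ^ 2 / σ ^ 4 + 2 * r / σ ^ 2)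
  have hprod : gam1 μ σ r * -gam2 μ σ r = 2 * r / σ ^ 2 := by
    unfold gam1 gam2
    linear_combination hs - (by field_simp : (μ / σ ^ 2) ^ 2 = μ ^ 2 / σ ^ 4)
  have hdiff : -gam2 μ σ r - gam1 μ σ r = 2 * μ / σ ^ 2 := by unfold gam1 gam2; ring
  rw [gap, hprod, hdiff, yUpper]
  field_simp
  ring

lemma fF_eq (H : Roots (gam1 μ σ r) (-gam2 μ σ r) (gam1 μ σ (r + q)) (gam2 μ σ (r + q)) Q)
    (y : ℝ) : fF μ σ r q y = exp (logG (gam1 μ σ r) (-gam2 μ σ r) (gam1 μ σ (r + q))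
      (gam2 μ σ (r + q)) y) - delP μ σ r q (bstar μ σ (r + q)) := by
  set b := gam1 μ σ r
  set c := -gam2 μ σ r
  have hgc : gam2 μ σ r = -c := (neg_neg _).symm
  have := H.pos; have := H.c_pos
  have hu := H.u_pos y; have hv := H.v_pos y
  set u := u b (gam1 μ σ (r + q)) (gam2 μ σ (r + q)) y
  set v := v c (gam1 μ σ (r + q)) (gam2 μ σ (r + q)) y
  have hU : delP μ σ r q y - b * del μ σ r q y = b ^ 2 * u := delP_sub_mul_del H.pos.ne' y
  have hV : delP μ σ r q y + c * del μ σ r q y = c ^ 2 * v := delP_add_mul_del H.c_pos.ne' y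
  have hfactor : -(b / gam2 μ σ r) * delP μ σ r q y + b * del μ σ r q y = b * c * v := by
    rw [hgc]; field_simp; exact hV
  have hbase : gam2 μ σ r ^ 2 / b ^ 2 *
      ((delP μ σ r q y - b * del μ σ r q y) / (delP μ σ r q y - gam2 μ σ r * del μ σ r q y)) =
      u / v := by
    rw [hgc, hU, neg_mul, sub_neg_eq_add, hV]; field_simp
  rw [fF, hfactor, hbase, hgc, sub_neg_eq_add,
    ← exp_log (by positivity : 0 < b * c * v * (u / v) ^ (b / (b + c)))]
  congr 2
  rw [log_mul (by positivity) (by positivity), log_mul (by positivity) hv.ne',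
    log_rpow (by positivity), log_div hu.ne' hv.ne', logG]
  linear_combination -log v * H.weights_add

lemma K1_eq (H : Roots (gam1 μ σ r) (-gam2 μ σ r) (gam1 μ σ (r + q)) (gam2 μ σ (r + q)) Q)
    (y : ℝ) : K1 μ σ r q y = (exp (logG (gam1 μ σ r) (-gam2 μ σ r) (gam1 μ σ (r + q))
      (gam2 μ σ (r + q)) y))⁻¹ := by
  set b := gam1 μ σ r
  set c := -gam2 μ σ r
  have hgc : gam2 μ σ r = -c := (neg_neg _).symm
  have := H.pos; have := H.c_pos
  have hu := H.u_pos y; have hv := H.v_pos y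
  set u := u b (gam1 μ σ (r + q)) (gam2 μ σ (r + q)) y
  set v := v c (gam1 μ σ (r + q)) (gam2 μ σ (r + q)) y
  set M := b / (b + c) * log u + c / (b + c) * log v
  set B := bstarY μ σ r q y
  have hU : delP μ σ r q y - b * del μ σ r q y = b ^ 2 * u := delP_sub_mul_del H.pos.ne' y
  have hV : delP μ σ r q y + c * del μ σ r q y = c ^ 2 * v := delP_add_mul_del H.c_pos.ne' y
  have hB : B = y + (log u - log v) / (b + c) := by
    have : gam2 μ σ r ^ 2 * (delP μ σ r q y - b * del μ σ r q y) /
        (b ^ 2 * (delP μ σ r q y - gam2 μ σ r * del μ σ r q y)) = u / v := by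
      rw [hgc, hU, neg_mul, sub_neg_eq_add, hV]; field_simp
    rw [show B = y + DeltaF μ σ r q y from rfl, DeltaF, this, log_div hu.ne' hv.ne', hgc,
      sub_neg_eq_add, one_div_mul_eq_div]
  have hψB : v * exp (b * B) = exp (b * y) * exp M := by
    rw [← exp_log hv, ← exp_add, ← exp_add]
    congr 1
    rw [hB]; simp only [M]; field_simp; ring
  have hφB : u * exp (-c * B) = exp (-c * y) * exp M := by
    rw [← exp_log hu, ← exp_add, ← exp_add]
    congr 1
    rw [hB]; simp only [M]; field_simp; ring
  have hden : del μ σ r q y * etaP μ σ r y B - delP μ σ r q y * etaF μ σ r y B =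
      -(b * c * (b + c) * exp (b * y) * exp (-c * y) * exp M) := by
    simp only [etaP, etaF, psiF, psiP, phiF, phiP, hgc]
    linear_combination (-b * exp (b * B) * exp (-c * y)) * hV
      + (-c * exp (-c * B) * exp (b * y)) * hU
      + (-b * c ^ 2 * exp (-c * y)) * hψB + (-c * b ^ 2 * exp (b * y)) * hφB
  have hlogG : logG b c (gam1 μ σ (r + q)) (gam2 μ σ (r + q)) y = log (b * c) + M := by
    rw [logG, add_assoc]
  have hnum : psiF μ σ r y * etaP μ σ r y B - psiP μ σ r y * etaF μ σ r y B =
      -(b * (b + c) * exp (b * y) * exp (b * B) * exp (-c * y)) := by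
    simp only [etaP, etaF, psiF, psiP, phiF, phiP, hgc]
    ring
  rw [K1, hnum, hden, hlogG, exp_add (log (b * c)) M, exp_log (by positivity), psiP,
    show gam1 μ σ r = b from rfl, show bstarY μ σ r q y = B from rfl]
  field_simp

end Parameters

/-- there exists a unique `y_l ∈ (0,y_u)` with `f(y_l)=0`; it lies in
`(b*_{r+q}, y_u)`, and `K₁(y)δ'(b*_{r+q}) > 1` on `(b*_{r+q}, y_l)` while
`K₁(y)δ'(b*_{r+q}) < 1` on `(y_l, y_u]`. -/
theorem stmt9 (μ σ r q : ℝ) (hμ : 0 < μ) (hσ : 0 < σ) (hr : 0 < r) (hq : 0 < q) :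
    ∃ yl ∈ Set.Ioo 0 (yUpper μ σ r q),
      fF μ σ r q yl = 0 ∧
      (∀ y ∈ Set.Ioo 0 (yUpper μ σ r q), fF μ σ r q y = 0 → y = yl) ∧
      yl ∈ Set.Ioo (bstar μ σ (r+q)) (yUpper μ σ r q) ∧
      (∀ y ∈ Set.Ioo (bstar μ σ (r+q)) yl,
        1 < K1 μ σ r q y * delP μ σ r q (bstar μ σ (r+q))) ∧
      (∀ y ∈ Set.Ioc yl (yUpper μ σ r q),
        K1 μ σ r q y * delP μ σ r q (bstar μ σ (r+q)) < 1) := by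
  have H := roots_gam hμ hσ hr hq
  have hf := fF_eq H
  have hmono : StrictMonoOn (fF μ σ r q) (Ici 0) := fun a ha y hy hay => by
    rw [hf, hf]; exact sub_lt_sub_right (exp_lt_exp.2 (H.strictMonoOn_logG ha hy hay)) _
  have hbst : 0 < bstar μ σ (r + q) := H.bst_pos
  have hyu : bstar μ σ (r + q) < yUpper μ σ r q := by
    rw [yUpper_eq hσ hr hq]; exact lt_add_of_pos_right _ H.gap_pos
  have hlow : fF μ σ r q (bstar μ σ (r + q)) < 0 := by
    rw [hf, sub_neg, delP_eq_expSum]; exact H.exp_logG_bst_lt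
  have hhigh : 0 < fF μ σ r q (yUpper μ σ r q) := by
    rw [hf, sub_pos, delP_eq_expSum, yUpper_eq hσ hr hq]; exact H.expSum_bst_lt_exp_logG
  have hcont : Continuous (fF μ σ r q) := by
    rw [funext hf]; exact (continuous_exp.comp H.continuous_logG).sub continuous_const
  obtain ⟨yl, ⟨hbyl, hylu⟩, hyl⟩ :=
    intermediate_value_Ioo hyu.le hcont.continuousOn ⟨hlow, hhigh⟩
  have hyl₀ : 0 < yl := hbst.trans hbyl
  refine ⟨yl, ⟨hyl₀, hylu⟩, hyl,
    fun y hy hfy => hmono.injOn hy.1.le hyl₀.le (hfy.trans hyl.symm), ⟨hbyl, hylu⟩,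
    fun y hy => ?_, fun y hy => ?_⟩
  · rw [K1_eq H, one_lt_inv_mul₀ (exp_pos _), ← sub_neg, ← hf, ← hyl]
    exact hmono (hbst.trans hy.1).le hyl₀.le hy.2
  · rw [K1_eq H, inv_mul_lt_one₀ (exp_pos _), ← sub_pos, ← hf, ← hyl]
    exact hmono hyl₀.le (hyl₀.trans hy.1).le hy.1
end
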